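/- Let K be a field of characteristic zero and let A be a K-bialgebra that is generated as a K-algebra by its space of primitive elements P = P(A). Then P is closed under the commutator bracket [x,y] := xy − yx (so P is a Lie subalgebra of A with the commutator bracket), and the canonical algebra homomorphism U(P) → A from the universal enveloping algebra of the Lie algebra (P, [−,−]) to A, induced by the inclusion P ↪ A via the universal property of U(P), is bijective; hence A is isomorphic as an algebra to the universal enveloping algebra of P. -/

import Mathlib

open TensorProduct LinearMap

noncomputable section

variable (K : Type*) [Field K]

section BraidedDefs

variable (V : Type*) [AddCommGroup V] [Module K V]

/-- The Yang–Baxter (braid) equation for `c : V ⊗ V → V ⊗ V`: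
`c₁ c₂ c₁ = c₂ c₁ c₂` on `(V ⊗ V) ⊗ V`, where `c₁ = c ⊗ id` and `c₂ = id ⊗ c`
(transported along the associator). -/
def YangBaxter (c : V ⊗[K] V →ₗ[K] V ⊗[K] V) : Prop :=
  (rTensor V c) ∘ₗ
      ((TensorProduct.assoc K V V V).symm.toLinearMap ∘ₗ (lTensor V c) ∘ₗ
        (TensorProduct.assoc K V V V).toLinearMap) ∘ₗ (rTensor V c)
    = ((TensorProduct.assoc K V V V).symm.toLinearMap ∘ₗ (lTensor V c) ∘ₗ
        (TensorProduct.assoc K V V V).toLinearMap) ∘ₗ (rTensor V c) ∘ₗ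
      ((TensorProduct.assoc K V V V).symm.toLinearMap ∘ₗ (lTensor V c) ∘ₗ
        (TensorProduct.assoc K V V V).toLinearMap)

variable {V}

/-- The image of `L ⊗ V` in `V ⊗ V`, for a subspace `L ≤ V`. -/
def lT (L : Submodule K V) : Submodule K (V ⊗[K] V) :=
  LinearMap.range (rTensor V L.subtype)

/-- The image of `V ⊗ L` in `V ⊗ V`, for a subspace `L ≤ V`. -/
def rT (L : Submodule K V) : Submodule K (V ⊗[K] V) :=
  LinearMap.range (lTensor V L.subtype)

/-- `L` is a pre-categorical subspace of `(V, c)`: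
`c (L⊗V + V⊗L) ⊆ L⊗V + V⊗L`. -/
def IsPreCategorical (c : V ⊗[K] V →ₗ[K] V ⊗[K] V) (L : Submodule K V) : Prop :=
  Submodule.map c (lT K L ⊔ rT K L) ≤ lT K L ⊔ rT K L

/-- `L` is a categorical subspace of `(V, c)`:
`c (L⊗V) ⊆ V⊗L` and `c (V⊗L) ⊆ L⊗V`. -/
def IsCategorical (c : V ⊗[K] V →ₗ[K] V ⊗[K] V) (L : Submodule K V) : Prop :=
  Submodule.map c (lT K L) ≤ rT K L ∧ Submodule.map c (rT K L) ≤ lT K L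

/-- A morphism of braided vector spaces `f : (V, cV) → (W, cW)`:
`cW ∘ (f ⊗ f) = (f ⊗ f) ∘ cV`. -/
def IsBraidedHom {W : Type*} [AddCommGroup W] [Module K W]
    (cV : V ⊗[K] V →ₗ[K] V ⊗[K] V) (cW : W ⊗[K] W →ₗ[K] W ⊗[K] W)
    (f : V →ₗ[K] W) : Prop :=
  cW ∘ₗ TensorProduct.map f f = TensorProduct.map f f ∘ₗ cV

end BraidedDefs

/-- A braided bialgebra `(B, m, u, Δ, ε, c)` over `K`, with all structure maps
given as `K`-linear maps. -/
structure BB (B : Type*) [AddCommGroup B] [Module K B] where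
  /-- multiplication -/
  mul : B ⊗[K] B →ₗ[K] B
  /-- unit -/
  unit : K →ₗ[K] B
  /-- comultiplication -/
  comul : B →ₗ[K] B ⊗[K] B
  /-- counit -/
  counit : B →ₗ[K] K
  /-- braiding -/
  braid : B ⊗[K] B →ₗ[K] B ⊗[K] B
  mul_assoc' : mul ∘ₗ rTensor B mul
      = mul ∘ₗ lTensor B mul ∘ₗ (TensorProduct.assoc K B B B).toLinearMap
  one_mul' : ∀ b : B, mul (unit 1 ⊗ₜ[K] b) = b
  mul_one' : ∀ b : B, mul (b ⊗ₜ[K] unit 1) = b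
  coassoc' : rTensor B comul ∘ₗ comul
      = (TensorProduct.assoc K B B B).symm.toLinearMap ∘ₗ lTensor B comul ∘ₗ comul
  counit_comul' : (TensorProduct.lid K B).toLinearMap ∘ₗ rTensor B counit ∘ₗ comul
      = LinearMap.id
  comul_counit' : (TensorProduct.rid K B).toLinearMap ∘ₗ lTensor B counit ∘ₗ comul
      = LinearMap.id
  yang_baxter' : YangBaxter K B braid
  braid_mul_left : braid ∘ₗ rTensor B mul
      = lTensor B mul ∘ₗ (TensorProduct.assoc K B B B).toLinearMap
          ∘ₗ rTensor B braid ∘ₗ (TensorProduct.assoc K B B B).symm.toLinearMap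
          ∘ₗ lTensor B braid ∘ₗ (TensorProduct.assoc K B B B).toLinearMap
  braid_mul_right : braid ∘ₗ lTensor B mul
      = rTensor B mul ∘ₗ (TensorProduct.assoc K B B B).symm.toLinearMap
          ∘ₗ lTensor B braid ∘ₗ (TensorProduct.assoc K B B B).toLinearMap
          ∘ₗ rTensor B braid ∘ₗ (TensorProduct.assoc K B B B).symm.toLinearMap
  braid_unit_left : ∀ b : B, braid (unit 1 ⊗ₜ[K] b) = b ⊗ₜ[K] unit 1
  braid_unit_right : ∀ b : B, braid (b ⊗ₜ[K] unit 1) = unit 1 ⊗ₜ[K] b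
  comul_braid_left : rTensor B comul ∘ₗ braid
      = (TensorProduct.assoc K B B B).symm.toLinearMap ∘ₗ lTensor B braid
          ∘ₗ (TensorProduct.assoc K B B B).toLinearMap ∘ₗ rTensor B braid
          ∘ₗ (TensorProduct.assoc K B B B).symm.toLinearMap ∘ₗ lTensor B comul
  comul_braid_right : lTensor B comul ∘ₗ braid
      = (TensorProduct.assoc K B B B).toLinearMap ∘ₗ rTensor B braid
          ∘ₗ (TensorProduct.assoc K B B B).symm.toLinearMap ∘ₗ lTensor B braid
          ∘ₗ (TensorProduct.assoc K B B B).toLinearMap ∘ₗ rTensor B comul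
  counit_braid_left : (TensorProduct.lid K B).toLinearMap ∘ₗ rTensor B counit ∘ₗ braid
      = (TensorProduct.rid K B).toLinearMap ∘ₗ lTensor B counit
  counit_braid_right : (TensorProduct.rid K B).toLinearMap ∘ₗ lTensor B counit ∘ₗ braid
      = (TensorProduct.lid K B).toLinearMap ∘ₗ rTensor B counit
  comul_mul' : comul ∘ₗ mul
      = TensorProduct.map mul mul
          ∘ₗ (TensorProduct.assoc K (B ⊗[K] B) B B).toLinearMap
          ∘ₗ rTensor B ((TensorProduct.assoc K B B B).symm.toLinearMap)
          ∘ₗ rTensor B (lTensor B braid)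
          ∘ₗ rTensor B ((TensorProduct.assoc K B B B).toLinearMap)
          ∘ₗ (TensorProduct.assoc K (B ⊗[K] B) B B).symm.toLinearMap
          ∘ₗ TensorProduct.map comul comul

variable {B B' : Type*} [AddCommGroup B] [Module K B] [AddCommGroup B'] [Module K B']

/-- A morphism of braided bialgebras: an algebra map, a coalgebra map and a morphism
of braided vector spaces. -/
def IsBBHom (A : BB K B) (A' : BB K B') (f : B →ₗ[K] B') : Prop :=
  f ∘ₗ A.mul = A'.mul ∘ₗ TensorProduct.map f f ∧
  f ∘ₗ A.unit = A'.unit ∧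
  A'.comul ∘ₗ f = TensorProduct.map f f ∘ₗ A.comul ∧
  A'.counit ∘ₗ f = A.counit ∧
  A'.braid ∘ₗ TensorProduct.map f f = TensorProduct.map f f ∘ₗ A.braid

/-- The space of primitive elements `P(B) = {x : Δ x = x ⊗ 1 + 1 ⊗ x}`. -/
def Prim (A : BB K B) : Submodule K B :=
  LinearMap.ker (A.comul - (TensorProduct.mk K B B).flip (A.unit 1)
    - TensorProduct.mk K B B (A.unit 1))

/-- The product `M · N` of two subspaces of a braided bialgebra `B`. -/
def mulSub (A : BB K B) (M N : Submodule K B) : Submodule K B :=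
  Submodule.map A.mul (LinearMap.range (TensorProduct.map M.subtype N.subtype))

/-- Iterated powers of a subspace `V` in `B`: `V^{·0} = K·1`, `V^{·(n+1)} = V^{·n} · V`. -/
def powSub (A : BB K B) (V : Submodule K B) : ℕ → Submodule K B
  | 0 => LinearMap.range A.unit
  | (n+1) => mulSub K A (powSub A V n) V

/-- `V` generates `B` as a `K`-algebra. -/
def GeneratesAlgebra (A : BB K B) (V : Submodule K B) : Prop :=
  (⨆ n, powSub K A V n) = ⊤

/-- A braided ideal of a braided bialgebra: a two-sided ideal which is a coideal and a
pre-categorical subspace. -/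
def IsBraidedIdeal (A : BB K B) (I : Submodule K B) : Prop :=
  mulSub K A ⊤ I ≤ I ∧ mulSub K A I ⊤ ≤ I ∧
  Submodule.map A.comul I ≤ lT K I ⊔ rT K I ∧
  I ≤ LinearMap.ker A.counit ∧
  IsPreCategorical K A.braid I

/-- The two-sided ideal `B·S·B` of `B` generated by a subspace `S`. -/
def idealGen (A : BB K B) (S : Submodule K B) : Submodule K B :=
  mulSub K A (mulSub K A ⊤ S) ⊤

/-- `(B, γ)` is a `(V, c)`-bialgebra: `γ` is a morphism of braided vector spaces from
`(V, c)` to the infinitesimal part of `B`, and `γ(V)` generates `B` as a `K`-algebra. -/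
def IsVCBialgebra {V : Type*} [AddCommGroup V] [Module K V]
    (c : V ⊗[K] V →ₗ[K] V ⊗[K] V) (A : BB K B) (γ : V →ₗ[K] B) : Prop :=
  LinearMap.range γ ≤ Prim K A ∧
  A.braid ∘ₗ TensorProduct.map γ γ = TensorProduct.map γ γ ∘ₗ c ∧
  GeneratesAlgebra K A (LinearMap.range γ)

attribute [local instance 100] LieRing.ofAssociativeRing

/-!
`U(L)` is a bialgebra in which every `ι x` is primitive, so a Lie map `φ : L → A` into the
primitives of a bialgebra `A` lifts to a bialgebra map `U(L) → A`; it is onto as soon as the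
image of `φ` generates `A`. For injectivity filter `U(L)` by the powers of `E = K·1 + ι(L)` and
induct on the filtration degree. If `u ∈ E^(n+2)` is killed by the lift, so is its reduced
coproduct `Δu - u ⊗ 1 - 1 ⊗ u`, which lies in `E^(n+1) ⊗ E^(n+1)`, where the lift is injective
by induction; so `u` is primitive. On `E^(n+2)` the operator `m ∘ Δ` is multiplication by
`2^(n+2)` modulo `E^(n+1)`, whereas on a primitive element it is multiplication by `2`; in
characteristic zero this puts `u` in `E^(n+1)`.
-/

section

variable {K}

namespace Bialgebra

section

variable (R : Type*) {A : Type*} [CommSemiring R] [Semiring A] [Bialgebra R A]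

def IsPrimitive (x : A) : Prop :=
  Coalgebra.comul (R := R) x = x ⊗ₜ[R] 1 + 1 ⊗ₜ[R] x

end

section

variable {R A : Type*} [CommRing R] [Ring A] [Bialgebra R A]

theorem IsPrimitive.counit_eq_zero {x : A} (hx : IsPrimitive R x) :
    Coalgebra.counit (R := R) x = 0 := by
  have h := congrArg (TensorProduct.lid R A) (Coalgebra.rTensor_counit_comul (R := R) x)
  rw [hx] at h
  simp only [map_add, rTensor_tmul, counit_one, TensorProduct.lid_tmul, one_smul,
    add_eq_right] at h
  simpa using congrArg (Coalgebra.counit (R := R)) h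

theorem IsPrimitive.commutator {x y : A} (hx : IsPrimitive R x) (hy : IsPrimitive R y) :
    IsPrimitive R (x * y - y * x) := by
  rw [IsPrimitive, map_sub, comul_mul, comul_mul, hx, hy]
  simp only [add_mul, mul_add, Algebra.TensorProduct.tmul_mul_tmul, one_mul, mul_one,
    sub_tmul, tmul_sub]
  abel

variable (R A) in
def augmentationProj : A →ₗ[R] A :=
  LinearMap.id - Algebra.linearMap R A ∘ₗ Coalgebra.counit

theorem augmentationProj_apply (a : A) :
    augmentationProj R A a = a - algebraMap R A (Coalgebra.counit a) :=
  rfl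

theorem augmentationProj_algebraMap (r : R) : augmentationProj R A (algebraMap R A r) = 0 := by
  rw [augmentationProj_apply, counit_algebraMap, sub_self]

theorem map_augmentationProj_comul {u : A} (hε : Coalgebra.counit (R := R) u = 0) :
    _root_.TensorProduct.map (augmentationProj R A) (augmentationProj R A)
      (Coalgebra.comul (R := R) u) = Coalgebra.comul (R := R) u - u ⊗ₜ[R] 1 - 1 ⊗ₜ[R] u := by
  have hl : (augmentationProj R A).lTensor A (Coalgebra.comul (R := R) u)
      = Coalgebra.comul (R := R) u - u ⊗ₜ[R] 1 := by
    rw [augmentationProj, lTensor_sub, LinearMap.sub_apply, lTensor_id_apply, lTensor_comp_apply,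
      Coalgebra.lTensor_counit_comul, lTensor_tmul, Algebra.linearMap_apply, map_one]
  have hr : (augmentationProj R A).rTensor A (Coalgebra.comul (R := R) u)
      = Coalgebra.comul (R := R) u - 1 ⊗ₜ[R] u := by
    rw [augmentationProj, rTensor_sub, LinearMap.sub_apply, rTensor_id_apply, rTensor_comp_apply,
      Coalgebra.rTensor_counit_comul, rTensor_tmul, Algebra.linearMap_apply, map_one]
  rw [← rTensor_comp_lTensor, LinearMap.comp_apply, hl, map_sub, hr, rTensor_tmul,
    augmentationProj_apply, hε, map_zero, sub_zero]
  abel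

end

end Bialgebra

section PowFiltration

variable {R B : Type*} [CommRing R] [Ring B] [Algebra R B] {E : Submodule R B}

theorem Submodule.commutator_mem_pow {x : B} (hx : ∀ y ∈ E, x * y - y * x ∈ E) {n : ℕ}
    {b : B} (hb : b ∈ E ^ n) : x * b - b * x ∈ E ^ n := by
  induction hb using Submodule.pow_induction_on_right' with
  | algebraMap r => simp [Algebra.commutes]
  | add a b i _ _ ha hb =>
    rw [show x * (a + b) - (a + b) * x = (x * a - a * x) + (x * b - b * x) by noncomm_ring]
    exact add_mem ha hb
  | mul_mem i v hv ih m hm =>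
    rw [show x * (v * m) - v * m * x = (x * v - v * x) * m + v * (x * m - m * x) by
      noncomm_ring, pow_succ]
    exact add_mem (Submodule.mul_mem_mul ih hm) (Submodule.mul_mem_mul hv (hx m hm))

theorem Submodule.exists_mem_pow_of_adjoin_eq_top (h1 : (1 : B) ∈ E)
    (hE : Algebra.adjoin R (E : Set B) = ⊤) (b : B) : ∃ n, b ∈ E ^ n := by
  have hmono {i j : ℕ} (hij : i ≤ j) := pow_le_pow_right' (Submodule.one_le.2 h1) hij
  induction (hE ▸ Algebra.mem_top : b ∈ Algebra.adjoin R (E : Set B)) using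
    Algebra.adjoin_induction with
  | mem y hy => exact ⟨1, by rwa [pow_one]⟩
  | algebraMap r => exact ⟨0, by rw [pow_zero]; exact Submodule.algebraMap_mem r⟩
  | add a b _ _ ha hb =>
    obtain ⟨⟨i, hi⟩, ⟨j, hj⟩⟩ := And.intro ha hb
    exact ⟨i + j, add_mem (hmono (by omega) hi) (hmono (by omega) hj)⟩
  | mul a b _ _ ha hb =>
    obtain ⟨⟨i, hi⟩, ⟨j, hj⟩⟩ := And.intro ha hb
    exact ⟨i + j, by rw [pow_add]; exact Submodule.mul_mem_mul hi hj⟩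

end PowFiltration

section TensorFiltration

variable {R B C : Type*} [CommRing R] [Ring B] [Algebra R B] [Ring C] [Algebra R C]

theorem Submodule.map₂_mk_mul_map₂_mk_le (M M' : Submodule R B) (N N' : Submodule R C) :
    Submodule.map₂ (TensorProduct.mk R B C) M N * Submodule.map₂ (TensorProduct.mk R B C) M' N'
      ≤ Submodule.map₂ (TensorProduct.mk R B C) (M * M') (N * N') := by
  rw [Submodule.map₂_eq_span_image2, Submodule.map₂_eq_span_image2, Submodule.span_mul_span,
    Submodule.span_le]
  rintro _ ⟨_, ⟨a, ha, b, hb, rfl⟩, _, ⟨a', ha', b', hb', rfl⟩, rfl⟩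
  simp only [TensorProduct.mk_apply, Algebra.TensorProduct.tmul_mul_tmul]
  exact Submodule.apply_mem_map₂ _ (Submodule.mul_mem_mul ha ha') (Submodule.mul_mem_mul hb hb')

variable (E : Submodule R B)

def tensorFiltration (n : ℕ) : Submodule R (B ⊗[R] B) :=
  ⨆ (i : ℕ) (j : ℕ) (_ : i + j ≤ n), Submodule.map₂ (TensorProduct.mk R B B) (E ^ i) (E ^ j)

variable {E}

theorem tensorFiltration_le_iff {n : ℕ} {Q : Submodule R (B ⊗[R] B)} :
    tensorFiltration E n ≤ Q ↔ ∀ i j, i + j ≤ n → ∀ a ∈ E ^ i, ∀ b ∈ E ^ j, a ⊗ₜ[R] b ∈ Q := by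
  simp only [tensorFiltration, iSup_le_iff, Submodule.map₂_le, TensorProduct.mk_apply]

theorem tmul_mem_tensorFiltration {i j n : ℕ} (hij : i + j ≤ n) {a b : B} (ha : a ∈ E ^ i)
    (hb : b ∈ E ^ j) : a ⊗ₜ[R] b ∈ tensorFiltration E n :=
  (le_iSup₂_of_le i j <| le_iSup_of_le hij le_rfl :
    Submodule.map₂ (TensorProduct.mk R B B) (E ^ i) (E ^ j) ≤ tensorFiltration E n)
    (Submodule.apply_mem_map₂ _ ha hb)

theorem tensorFiltration_mul_le (n m : ℕ) :
    tensorFiltration E n * tensorFiltration E m ≤ tensorFiltration E (n + m) := by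
  simp only [tensorFiltration, Submodule.iSup_mul, Submodule.mul_iSup, iSup_le_iff]
  intro i' j' hij' i j hij
  refine (Submodule.map₂_mk_mul_map₂_mk_le _ _ _ _).trans ?_
  rw [← pow_add, ← pow_add]
  exact le_iSup₂_of_le (i + i') (j + j') <| le_iSup_of_le (by omega) le_rfl

theorem mul'_mul_one_tmul (z : B ⊗[R] B) (c : B) :
    LinearMap.mul' R B (z * (1 ⊗ₜ c)) = LinearMap.mul' R B z * c := by
  induction z with
  | zero => simp
  | tmul a b => simp [mul_assoc]
  | add y z hy hz => rw [add_mul, map_add, map_add, hy, hz, add_mul]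

theorem mul'_mul_tmul_one_sub_mem (h1 : (1 : B) ∈ E) {x : B}
    (hx : ∀ y ∈ E, x * y - y * x ∈ E) {n : ℕ} {z : B ⊗[R] B} (hz : z ∈ tensorFiltration E n) :
    LinearMap.mul' R B (z * (x ⊗ₜ 1)) - LinearMap.mul' R B z * x ∈ E ^ n := by
  let D : B ⊗[R] B →ₗ[R] B := LinearMap.mul' R B ∘ₗ LinearMap.mulRight R (x ⊗ₜ 1) -
    LinearMap.mulRight R x ∘ₗ LinearMap.mul' R B
  suffices tensorFiltration E n ≤ (E ^ n).comap D from this hz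
  refine tensorFiltration_le_iff.2 fun i j hij a ha b hb => ?_
  have hmem : a * (x * b - b * x) ∈ E ^ n :=
    pow_le_pow_right' (Submodule.one_le.2 h1) hij
      (pow_add E i j ▸ Submodule.mul_mem_mul ha (Submodule.commutator_mem_pow hx hb))
  simpa [D, mul_sub, mul_assoc] using hmem

end TensorFiltration

section BialgebraFiltration

variable {R B : Type*} [CommRing R] [Ring B] [Bialgebra R B] {E : Submodule R B}

theorem comul_mem_tensorFiltration
    (hE : ∀ y ∈ E, Coalgebra.comul (R := R) y ∈ tensorFiltration E 1) {n : ℕ} {b : B}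
    (hb : b ∈ E ^ n) : Coalgebra.comul (R := R) b ∈ tensorFiltration E n := by
  induction hb using Submodule.pow_induction_on_right' with
  | algebraMap r =>
    have h1 : (1 : B) ∈ E ^ 0 := by rw [pow_zero]; exact Submodule.one_le.1 le_rfl
    have h11 : (1 : B) ⊗ₜ[R] (1 : B) ∈ tensorFiltration E 0 :=
      tmul_mem_tensorFiltration (R := R) (E := E) (le_refl 0) h1 h1
    rw [Bialgebra.comul_algebraMap, Algebra.algebraMap_eq_smul_one,
      Algebra.TensorProduct.one_def]
    exact Submodule.smul_mem _ r h11
  | add a b i _ _ ha hb => rw [map_add]; exact add_mem ha hb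
  | mul_mem i v _ ih m hm =>
    rw [Bialgebra.comul_mul]
    exact tensorFiltration_mul_le i 1 (Submodule.mul_mem_mul ih (hE m hm))

/-- `augmentationProj` kills `E ^ 0`, so only the terms `E ^ i ⊗ E ^ j` with `i, j ≥ 1`, hence
`i, j ≤ n`, survive. -/
theorem map_augmentationProj_mem (h1 : (1 : B) ∈ E) {n : ℕ} {z : B ⊗[R] B}
    (hz : z ∈ tensorFiltration E (n + 1)) :
    TensorProduct.map (Bialgebra.augmentationProj R B) (Bialgebra.augmentationProj R B) z
      ∈ Submodule.map₂ (TensorProduct.mk R B B) (E ^ n) (E ^ n) := by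
  have hmem {i : ℕ} {a : B} (ha : a ∈ E ^ i) (hi : i ≤ n) :
      Bialgebra.augmentationProj R B a ∈ E ^ n := by
    have h1n : (1 : B) ∈ E ^ n :=
      Submodule.one_le.1 (one_le_pow_of_one_le' (Submodule.one_le.2 h1) n)
    rw [Bialgebra.augmentationProj_apply, Algebra.algebraMap_eq_smul_one]
    exact sub_mem (pow_le_pow_right' (Submodule.one_le.2 h1) hi ha) (Submodule.smul_mem _ _ h1n)
  suffices tensorFiltration E (n + 1) ≤
      (Submodule.map₂ (TensorProduct.mk R B B) (E ^ n) (E ^ n)).comap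
        (TensorProduct.map (Bialgebra.augmentationProj R B) (Bialgebra.augmentationProj R B)) from
    this hz
  refine tensorFiltration_le_iff.2 fun i j hij a ha b hb => ?_
  rw [Submodule.mem_comap, map_tmul]
  rcases i with _ | i
  · obtain ⟨r, rfl⟩ := Submodule.mem_one.1 (pow_zero E ▸ ha)
    rw [Bialgebra.augmentationProj_algebraMap, zero_tmul]
    exact zero_mem _
  rcases j with _ | j
  · obtain ⟨r, rfl⟩ := Submodule.mem_one.1 (pow_zero E ▸ hb)
    rw [Bialgebra.augmentationProj_algebraMap, tmul_zero]
    exact zero_mem _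
  exact Submodule.apply_mem_map₂ _ (hmem ha (by omega)) (hmem hb (by omega))

end BialgebraFiltration

theorem TensorProduct.eq_zero_of_map_eq_zero_of_mem_map₂ {V V' W W' : Type*}
    [AddCommGroup V] [Module K V] [AddCommGroup V'] [Module K V'] [AddCommGroup W] [Module K W]
    [AddCommGroup W'] [Module K W'] {f : V →ₗ[K] W} {g : V' →ₗ[K] W'} {M : Submodule K V}
    {N : Submodule K V'} (hf : ∀ v ∈ M, f v = 0 → v = 0) (hg : ∀ v ∈ N, g v = 0 → v = 0)
    {z : V ⊗[K] V'} (hz : z ∈ Submodule.map₂ (TensorProduct.mk K V V') M N)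
    (hfg : TensorProduct.map f g z = 0) : z = 0 := by
  rw [← M.range_subtype, ← N.range_subtype, ← TensorProduct.range_map] at hz
  obtain ⟨w, rfl⟩ := hz
  have hfM : Function.Injective (f ∘ₗ M.subtype) :=
    (injective_iff_map_eq_zero _).2 fun v hv => Subtype.ext (hf v v.2 hv)
  have hgN : Function.Injective (g ∘ₗ N.subtype) :=
    (injective_iff_map_eq_zero _).2 fun v hv => Subtype.ext (hg v v.2 hv)
  rw [← LinearMap.comp_apply, ← TensorProduct.map_comp] at hfg
  rw [(TensorProduct.map_injective_of_flat_flat _ _ hfM hgN).eq_iff' (map_zero _) |>.1 hfg,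
    map_zero]

namespace UniversalEnvelopingAlgebra

section Bialgebra

variable (R : Type*) [CommRing R] (L : Type*) [LieRing L] [LieAlgebra R L]

theorem mkAlgHom_surjective : Function.Surjective (mkAlgHom R L) :=
  RingCon.mkₐ_surjective _

theorem adjoin_range_ι :
    Algebra.adjoin R (Set.range (ι R : L → UniversalEnvelopingAlgebra R L)) = ⊤ := by
  refine top_unique fun u _ => ?_
  obtain ⟨t, rfl⟩ := mkAlgHom_surjective R L u
  induction t using TensorAlgebra.induction with
  | algebraMap r => rw [AlgHom.commutes]; exact Subalgebra.algebraMap_mem _ r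
  | ι x => exact Algebra.subset_adjoin ⟨x, rfl⟩
  | add a b ha hb => rw [map_add]; exact add_mem (ha trivial) (hb trivial)
  | mul a b ha hb => rw [map_mul]; exact mul_mem (ha trivial) (hb trivial)

variable {R L} in
/-- Unlike `hom_ext`, this puts no Lie ring structure on `A`, so it also applies to targets
such as `R ⊗[R] U(L)`, which already carry a different one. -/
theorem algHom_ext' {A : Type*} [Semiring A] [Algebra R A]
    {f g : UniversalEnvelopingAlgebra R L →ₐ[R] A} (h : ∀ x, f (ι R x) = g (ι R x)) : f = g :=
  AlgHom.ext_of_adjoin_eq_top (adjoin_range_ι R L) (by rintro _ ⟨x, rfl⟩; exact h x)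

def comulLieHom :
    L →ₗ⁅R⁆ UniversalEnvelopingAlgebra R L ⊗[R] UniversalEnvelopingAlgebra R L where
  toLinearMap := (TensorProduct.mk R _ _).flip 1 ∘ₗ (ι R).toLinearMap +
    TensorProduct.mk R _ _ 1 ∘ₗ (ι R).toLinearMap
  map_lie' {x y} := by
    simp only [LinearMap.toFun_eq_coe, LinearMap.add_apply, LinearMap.coe_comp,
      Function.comp_apply, LieHom.coe_toLinearMap, TensorProduct.mk_apply, LinearMap.flip_apply,
      LieHom.map_lie, Ring.lie_def, TensorProduct.sub_tmul, TensorProduct.tmul_sub, add_mul,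
      mul_add, Algebra.TensorProduct.tmul_mul_tmul, one_mul, mul_one]
    abel

variable {R L} in
theorem comulLieHom_apply (x : L) : comulLieHom R L x = ι R x ⊗ₜ 1 + 1 ⊗ₜ ι R x := rfl

instance instBialgebra : Bialgebra R (UniversalEnvelopingAlgebra R L) :=
  .ofAlgHom (lift R (comulLieHom R L)) (lift R 0)
    (algHom_ext' fun x => by
      simp only [AlgHom.coe_comp, Function.comp_apply, lift_ι_apply, comulLieHom_apply, map_add,
        Algebra.TensorProduct.map_tmul, map_one, AlgHom.coe_id, id_eq, AlgEquiv.coe_toAlgHom,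
        Algebra.TensorProduct.assoc_tmul, TensorProduct.add_tmul, TensorProduct.tmul_add,
        Algebra.TensorProduct.one_def]
      abel)
    (algHom_ext' fun x => by simp [comulLieHom_apply])
    (algHom_ext' fun x => by simp [comulLieHom_apply])

variable {R L}

theorem comul_ι (x : L) :
    Coalgebra.comul (R := R) (ι R x) = ι R x ⊗ₜ[R] 1 + 1 ⊗ₜ[R] ι R x :=
  lift_ι_apply _ _ x

theorem counit_ι (x : L) : Coalgebra.counit (R := R) (ι R x) = 0 :=
  lift_ι_apply _ _ x

end Bialgebra

section Filtration

variable (R : Type*) [CommRing R] (L : Type*) [LieRing L] [LieAlgebra R L]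

def degreeLEOne : Submodule R (UniversalEnvelopingAlgebra R L) :=
  1 ⊔ LinearMap.range (ι R : L →ₗ⁅R⁆ UniversalEnvelopingAlgebra R L).toLinearMap

variable {R L}

theorem mem_degreeLEOne {u : UniversalEnvelopingAlgebra R L} :
    u ∈ degreeLEOne R L ↔ ∃ r x, algebraMap R _ r + ι R x = u := by
  simp only [degreeLEOne, Submodule.mem_sup, Submodule.mem_one, LinearMap.mem_range,
    LieHom.coe_toLinearMap]
  constructor
  · rintro ⟨_, ⟨r, rfl⟩, _, ⟨x, rfl⟩, rfl⟩; exact ⟨r, x, rfl⟩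
  · rintro ⟨r, x, rfl⟩; exact ⟨_, ⟨r, rfl⟩, _, ⟨x, rfl⟩, rfl⟩

theorem one_mem_degreeLEOne : (1 : UniversalEnvelopingAlgebra R L) ∈ degreeLEOne R L :=
  mem_degreeLEOne.2 ⟨1, 0, by simp⟩

theorem ι_mem_degreeLEOne (x : L) : ι R x ∈ degreeLEOne R L :=
  mem_degreeLEOne.2 ⟨0, x, by simp⟩

theorem exists_mem_degreeLEOne_pow (u : UniversalEnvelopingAlgebra R L) :
    ∃ n, u ∈ degreeLEOne R L ^ n := by
  refine Submodule.exists_mem_pow_of_adjoin_eq_top one_mem_degreeLEOne (top_unique ?_) u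
  rw [← adjoin_range_ι]
  exact Algebra.adjoin_mono (Set.range_subset_iff.2 ι_mem_degreeLEOne)

theorem comul_mem_tensorFiltration_degreeLEOne {n : ℕ} {u : UniversalEnvelopingAlgebra R L}
    (hu : u ∈ degreeLEOne R L ^ n) :
    Coalgebra.comul (R := R) u ∈ tensorFiltration (degreeLEOne R L) n := by
  refine comul_mem_tensorFiltration (fun y hy => ?_) hu
  obtain ⟨r, x, rfl⟩ := mem_degreeLEOne.1 hy
  have h0 : (1 : UniversalEnvelopingAlgebra R L) ∈ degreeLEOne R L ^ 0 := by
    rw [pow_zero]; exact Submodule.one_le.1 le_rfl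
  have h1 : ι R x ∈ degreeLEOne R L ^ 1 := by rw [pow_one]; exact ι_mem_degreeLEOne x
  have h00 : 1 ⊗ₜ[R] 1 ∈ tensorFiltration (degreeLEOne R L) 1 :=
    tmul_mem_tensorFiltration (Nat.zero_le 1) h0 h0
  have h10 : ι R x ⊗ₜ[R] 1 ∈ tensorFiltration (degreeLEOne R L) 1 :=
    tmul_mem_tensorFiltration (le_refl 1) h1 h0
  have h01 : 1 ⊗ₜ[R] ι R x ∈ tensorFiltration (degreeLEOne R L) 1 :=
    tmul_mem_tensorFiltration (le_refl 1) h0 h1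
  rw [map_add, Bialgebra.comul_algebraMap, Algebra.algebraMap_eq_smul_one,
    Algebra.TensorProduct.one_def, comul_ι]
  exact add_mem (Submodule.smul_mem _ r h00) (add_mem h10 h01)

theorem ι_commutator_mem_degreeLEOne (x : L) {y : UniversalEnvelopingAlgebra R L}
    (hy : y ∈ degreeLEOne R L) : ι R x * y - y * ι R x ∈ degreeLEOne R L := by
  obtain ⟨r, z, rfl⟩ := mem_degreeLEOne.1 hy
  rw [mul_add, add_mul, Algebra.commutes, add_sub_add_left_eq_sub, ← Ring.lie_def,
    ← LieHom.map_lie]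
  exact ι_mem_degreeLEOne _

theorem mul'_comul_mul_ι (v : UniversalEnvelopingAlgebra R L) (x : L) :
    LinearMap.mul' R _ (Coalgebra.comul (R := R) (v * ι R x))
      = LinearMap.mul' R _ (Coalgebra.comul (R := R) v * (ι R x ⊗ₜ 1))
        + LinearMap.mul' R _ (Coalgebra.comul (R := R) v) * ι R x := by
  rw [Bialgebra.comul_mul, comul_ι, mul_add, map_add, mul'_mul_one_tmul]

theorem mul'_comul_mul_sub_mem {n : ℕ} {v m : UniversalEnvelopingAlgebra R L}
    (hv : v ∈ degreeLEOne R L ^ (n + 1))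
    (hsq : LinearMap.mul' R _ (Coalgebra.comul (R := R) v) - (2 : R) ^ (n + 1) • v
      ∈ degreeLEOne R L ^ n)
    (hm : m ∈ degreeLEOne R L) :
    LinearMap.mul' R _ (Coalgebra.comul (R := R) (v * m)) - (2 : R) ^ (n + 2) • (v * m)
      ∈ degreeLEOne R L ^ (n + 1) := by
  set μ := LinearMap.mul' R (UniversalEnvelopingAlgebra R L)
  set w := μ (Coalgebra.comul (R := R) v) - (2 : R) ^ (n + 1) • v
  obtain ⟨r, x, rfl⟩ := mem_degreeLEOne.1 hm
  have h1 : (1 : UniversalEnvelopingAlgebra R L) ∈ degreeLEOne R L := one_mem_degreeLEOne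
  have hr : μ (Coalgebra.comul (R := R) (v * algebraMap R _ r))
      - (2 : R) ^ (n + 2) • (v * algebraMap R _ r) = r • (w - (2 : R) ^ (n + 1) • v) := by
    rw [← Algebra.commutes, ← Algebra.smul_def, map_smul, map_smul, pow_succ _ (n + 1)]
    module
  have hι : μ (Coalgebra.comul (R := R) (v * ι R x)) - (2 : R) ^ (n + 2) • (v * ι R x)
      = (μ (Coalgebra.comul (R := R) v * (ι R x ⊗ₜ 1)) - μ (Coalgebra.comul (R := R) v) * ι R x)
        + (2 : R) • (w * ι R x) := by
    rw [mul'_comul_mul_ι, pow_succ _ (n + 1)]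
    simp only [w, sub_mul, smul_mul_assoc]
    module
  rw [mul_add, map_add, map_add, smul_add, add_sub_add_comm, hr, hι]
  refine add_mem (Submodule.smul_mem _ r (sub_mem ?_ (Submodule.smul_mem _ _ hv)))
    (add_mem ?_ (Submodule.smul_mem _ _ ?_))
  · exact pow_le_pow_right' (Submodule.one_le.2 h1) n.le_succ hsq
  · exact mul'_mul_tmul_one_sub_mem h1 (fun y hy => ι_commutator_mem_degreeLEOne x hy)
      (comul_mem_tensorFiltration_degreeLEOne hv)
  · rw [pow_succ]
    exact Submodule.mul_mem_mul hsq (ι_mem_degreeLEOne x)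

theorem mul'_comul_sub_mem {n : ℕ} {u : UniversalEnvelopingAlgebra R L}
    (hu : u ∈ degreeLEOne R L ^ (n + 1)) :
    LinearMap.mul' R _ (Coalgebra.comul (R := R) u) - (2 : R) ^ (n + 1) • u
      ∈ degreeLEOne R L ^ n := by
  induction n generalizing u with
  | zero =>
    obtain ⟨r, x, rfl⟩ := mem_degreeLEOne.1 (pow_one (degreeLEOne R L) ▸ hu)
    have : LinearMap.mul' R _ (Coalgebra.comul (R := R) (algebraMap R _ r + ι R x))
        - (2 : R) ^ (0 + 1) • (algebraMap R _ r + ι R x) = algebraMap R _ (-r) := by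
      rw [map_add, Bialgebra.comul_algebraMap, comul_ι, Algebra.TensorProduct.algebraMap_apply]
      simp only [map_add, LinearMap.mul'_apply, mul_one, one_mul, map_neg]
      rw [Algebra.algebraMap_eq_smul_one]
      module
    rw [this, pow_zero]
    exact Submodule.algebraMap_mem _
  | succ n ih =>
    let D : UniversalEnvelopingAlgebra R L →ₗ[R] UniversalEnvelopingAlgebra R L :=
      LinearMap.mul' R _ ∘ₗ Coalgebra.comul - (2 : R) ^ (n + 2) • LinearMap.id
    suffices degreeLEOne R L ^ (n + 1) * degreeLEOne R L ≤ (degreeLEOne R L ^ (n + 1)).comap D from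
      this (pow_succ (degreeLEOne R L) (n + 1) ▸ hu)
    exact Submodule.mul_le.2 fun v hv m hm => mul'_comul_mul_sub_mem hv (ih hv) hm

end Filtration

section Field

variable {L : Type*} [LieRing L] [LieAlgebra K L]

theorem mem_degreeLEOne_pow_of_isPrimitive [CharZero K] {n : ℕ}
    {u : UniversalEnvelopingAlgebra K L} (hu : u ∈ degreeLEOne K L ^ (n + 2))
    (hp : Bialgebra.IsPrimitive K u) : u ∈ degreeLEOne K L ^ (n + 1) := by
  have hsq := mul'_comul_sub_mem hu
  rw [hp, map_add, LinearMap.mul'_apply, LinearMap.mul'_apply, mul_one, one_mul,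
    ← two_smul K u, ← sub_smul] at hsq
  have h2 : (2 : K) - 2 ^ (n + 2) ≠ 0 := by
    rw [sub_ne_zero]
    have h4 : 2 ^ 2 ≤ 2 ^ (n + 2) := Nat.pow_le_pow_right two_pos (by omega)
    exact_mod_cast (by omega : 2 ≠ 2 ^ (n + 2))
  simpa [h2] using Submodule.smul_mem _ ((2 : K) - 2 ^ (n + 2))⁻¹ hsq

variable {A : Type*} [Ring A] [Bialgebra K A]

def liftBialgHom (φ : L →ₗ⁅K⁆ A) (hφ : ∀ x, Bialgebra.IsPrimitive K (φ x)) :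
    UniversalEnvelopingAlgebra K L →ₐc[K] A :=
  .ofAlgHom (lift K φ)
    (algHom_ext' fun x => by
      rw [AlgHom.comp_apply, lift_ι_apply, Bialgebra.counitAlgHom_apply,
        Bialgebra.counitAlgHom_apply, (hφ x).counit_eq_zero, counit_ι])
    (algHom_ext' fun x => by
      rw [AlgHom.comp_apply, AlgHom.comp_apply, lift_ι_apply, Bialgebra.comulAlgHom_apply,
        Bialgebra.comulAlgHom_apply, comul_ι, hφ x, map_add, Algebra.TensorProduct.map_tmul,
        Algebra.TensorProduct.map_tmul, lift_ι_apply, map_one])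

variable {φ : L →ₗ⁅K⁆ A}

theorem counit_lift (hφ : ∀ x, Bialgebra.IsPrimitive K (φ x))
    (u : UniversalEnvelopingAlgebra K L) :
    Coalgebra.counit (R := K) (lift K φ u) = Coalgebra.counit (R := K) u :=
  CoalgHomClass.counit_comp_apply (liftBialgHom φ hφ) u

theorem comul_lift (hφ : ∀ x, Bialgebra.IsPrimitive K (φ x))
    (u : UniversalEnvelopingAlgebra K L) :
    Coalgebra.comul (R := K) (lift K φ u) = TensorProduct.map (lift K φ).toLinearMap
      (lift K φ).toLinearMap (Coalgebra.comul (R := K) u) :=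
  (CoalgHomClass.map_comp_comul_apply (liftBialgHom φ hφ) u).symm

theorem isPrimitive_of_lift_eq_zero (hφ : ∀ x, Bialgebra.IsPrimitive K (φ x)) {n : ℕ}
    (hinj : ∀ v ∈ degreeLEOne K L ^ n, lift K φ v = 0 → v = 0)
    {u : UniversalEnvelopingAlgebra K L} (hu : u ∈ degreeLEOne K L ^ (n + 1))
    (h0 : lift K φ u = 0) : Bialgebra.IsPrimitive K u := by
  have hε : Coalgebra.counit (R := K) u = 0 := by rw [← counit_lift hφ, h0, map_zero]
  have hred : Coalgebra.comul (R := K) u - u ⊗ₜ[K] 1 - 1 ⊗ₜ[K] u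
      ∈ Submodule.map₂ (TensorProduct.mk K _ _) (degreeLEOne K L ^ n) (degreeLEOne K L ^ n) :=
    Bialgebra.map_augmentationProj_comul hε ▸
      map_augmentationProj_mem one_mem_degreeLEOne (comul_mem_tensorFiltration_degreeLEOne hu)
  have hmap : TensorProduct.map (lift K φ).toLinearMap (lift K φ).toLinearMap
      (Coalgebra.comul (R := K) u - u ⊗ₜ[K] 1 - 1 ⊗ₜ[K] u) = 0 := by
    rw [map_sub, map_sub, ← comul_lift hφ, map_tmul, map_tmul, AlgHom.toLinearMap_apply, h0,
      map_zero, zero_tmul, tmul_zero, sub_zero, sub_zero]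
  have := TensorProduct.eq_zero_of_map_eq_zero_of_mem_map₂ hinj hinj hred hmap
  rwa [sub_sub, sub_eq_zero] at this

theorem lift_injective_of_isPrimitive [CharZero K] (hφ : Function.Injective φ)
    (hprim : ∀ x, Bialgebra.IsPrimitive K (φ x)) : Function.Injective (lift K φ) := by
  suffices h : ∀ n, ∀ u ∈ degreeLEOne K L ^ n, lift K φ u = 0 → u = 0 by
    refine (injective_iff_map_eq_zero _).2 fun u hu => ?_
    obtain ⟨n, hn⟩ := exists_mem_degreeLEOne_pow u
    exact h n u hn hu
  intro n
  induction n with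
  | zero =>
    intro u hu h0
    obtain ⟨r, rfl⟩ := Submodule.mem_one.1 (pow_zero (degreeLEOne K L) ▸ hu)
    rw [AlgHom.commutes, map_eq_zero_iff _ (Bialgebra.algebraMap_injective A)] at h0
    rw [h0, map_zero]
  | succ n ih =>
    intro u hu h0
    rcases n with _ | n
    -- a primitive element of degree `≤ 1` need not drop in degree; use `ε` and `φ` instead
    · obtain ⟨r, x, rfl⟩ := mem_degreeLEOne.1 (pow_one (degreeLEOne K L) ▸ hu)
      have hr := counit_lift hprim (algebraMap K _ r + ι K x)
      rw [h0, map_zero, map_add, Bialgebra.counit_algebraMap, counit_ι, add_zero, eq_comm] at hr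
      rw [hr, map_zero, zero_add, lift_ι_apply, map_eq_zero_iff _ hφ] at h0
      rw [hr, h0, map_zero, map_zero, zero_add]
    · exact ih u (mem_degreeLEOne_pow_of_isPrimitive hu
        (isPrimitive_of_lift_eq_zero hprim ih hu h0)) h0

theorem range_lift (φ : L →ₗ⁅K⁆ A) : (lift K φ).range = Algebra.adjoin K (Set.range φ) := by
  rw [← Algebra.map_top, ← adjoin_range_ι, AlgHom.map_adjoin, ← Set.range_comp, ι_comp_lift]

end Field

end UniversalEnvelopingAlgebra

end

/-- **Milnor–Moore.** In characteristic zero, if a bialgebra `A` is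
generated as an algebra by its primitives `P`, then `P` is closed under the commutator
bracket, and for any Lie subalgebra structure `L` on `P` (with the commutator bracket of
`A`) the canonical algebra homomorphism `U(L) → A` induced by the inclusion is
bijective. -/
theorem stmt_16 (A : Type*) [CharZero K] [Ring A] [Bialgebra K A]
    (hgen : Algebra.adjoin K
        {x : A | Coalgebra.comul (R := K) x = x ⊗ₜ[K] 1 + 1 ⊗ₜ[K] x} = ⊤) :
    (∀ x y : A,
        Coalgebra.comul (R := K) x = x ⊗ₜ[K] 1 + 1 ⊗ₜ[K] x →
        Coalgebra.comul (R := K) y = y ⊗ₜ[K] 1 + 1 ⊗ₜ[K] y →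
        Coalgebra.comul (R := K) (x * y - y * x)
          = (x * y - y * x) ⊗ₜ[K] 1 + 1 ⊗ₜ[K] (x * y - y * x)) ∧
    ∀ Lie : LieSubalgebra K A,
      (Lie : Set A) = {x : A | Coalgebra.comul (R := K) x = x ⊗ₜ[K] 1 + 1 ⊗ₜ[K] x} →
      Function.Bijective (UniversalEnvelopingAlgebra.lift K Lie.incl) := by
  refine ⟨fun x y hx hy => Bialgebra.IsPrimitive.commutator hx hy, fun P hP => ⟨?_, ?_⟩⟩
  · have hprim (x : P) : Bialgebra.IsPrimitive K (x : A) := by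
      have hx : (x : A) ∈ (P : Set A) := x.2
      rwa [hP] at hx
    exact UniversalEnvelopingAlgebra.lift_injective_of_isPrimitive Subtype.val_injective hprim
  · rw [← AlgHom.range_eq_top, UniversalEnvelopingAlgebra.range_lift, LieSubalgebra.coe_incl,
      Subtype.range_coe, hP, hgen]
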